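/- Let φ be an upper invariant, ordinally efficient, and symmetric mechanism on 4 agents and objects {a,b,c,d}. At the profile where agents 1,2 report a ≻ b ≻ c ≻ d and agents 3,4 report a ≻ b ≻ d ≻ c, the assignment is: agents 1,2 each get (1/4, 1/4, 1/2, 0) for (a,b,c,d), and agents 3,4 each get (1/4, 1/4, 0, 1/2). -/
import Mathlib


open Finset

/-- A strict preference order over `n` objects, encoded as a rank function:
`P j < P j'` means object `j` is strictly preferred to object `j'`. -/
abbrev Pref (n : ℕ) := Fin n ≃ Fin n

/-- A (random) assignment: rows are agents, columns are objects. -/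
abbrev Assignment (n : ℕ) := Fin n → Fin n → ℝ

/-- Bi-stochastic matrix: nonnegative entries, all rows and columns sum to 1. -/
def BiStochastic {n : ℕ} (x : Assignment n) : Prop :=
  (∀ i j, 0 ≤ x i j) ∧ (∀ i, ∑ j, x i j = 1) ∧ (∀ j, ∑ i, x i j = 1)

/-- A mechanism maps preference profiles to assignments. -/
abbrev Mechanism (n : ℕ) := (Fin n → Pref n) → Assignment n

/-- A mechanism always outputs bi-stochastic matrices. -/
def ValidMech {n : ℕ} (φ : Mechanism n) : Prop := ∀ P, BiStochastic (φ P)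

/-- `P'` arises from `P` by swapping the consecutively ranked objects `j ≻ j'`. -/
def AdjSwap {n : ℕ} (P P' : Pref n) (j j' : Fin n) : Prop :=
  (P j' : ℕ) = (P j : ℕ) + 1 ∧ P' = (Equiv.swap j j').trans P

/-- Upper invariance: a swap of consecutive `j ≻ j'` leaves the swapping agent's
probabilities for objects strictly preferred to `j` unchanged. -/
def UpperInvariant {n : ℕ} (φ : Mechanism n) : Prop :=
  ∀ (P : Fin n → Pref n) (i j j' : Fin n) (P' : Pref n),
    AdjSwap (P i) P' j j' →
    ∀ k, P i k < P i j → φ (Function.update P i P') i k = φ P i k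

/-- Lower invariance: a swap of consecutive `j ≻ j'` leaves the swapping agent's
probabilities for objects ranked strictly below `j'` unchanged. -/
def LowerInvariant {n : ℕ} (φ : Mechanism n) : Prop :=
  ∀ (P : Fin n → Pref n) (i j j' : Fin n) (P' : Pref n),
    AdjSwap (P i) P' j j' →
    ∀ k, P i j' < P i k → φ (Function.update P i P') i k = φ P i k

/-- Swap monotonicity: after a swap of consecutive `j ≻ j'`, either the agent's
assignment vector is unchanged, or her probability for `j` strictly decreases and
her probability for `j'` strictly increases. -/
def SwapMonotonic {n : ℕ} (φ : Mechanism n) : Prop :=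
  ∀ (P : Fin n → Pref n) (i j j' : Fin n) (P' : Pref n),
    AdjSwap (P i) P' j j' →
    φ (Function.update P i P') i = φ P i ∨
      (φ (Function.update P i P') i j < φ P i j ∧
       φ P i j' < φ (Function.update P i P') i j')

/-- `y` first order-stochastically dominates `x` at preference order `P`. -/
def FOSD {n : ℕ} (P : Pref n) (y x : Fin n → ℝ) : Prop :=
  ∀ j, ∑ k ∈ univ.filter (fun k => P k ≤ P j), x k ≤
       ∑ k ∈ univ.filter (fun k => P k ≤ P j), y k

/-- `y` strictly ordinally dominates `x` at profile `P`. -/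
def StrictDom {n : ℕ} (P : Fin n → Pref n) (y x : Assignment n) : Prop :=
  (∀ i, FOSD (P i) (y i) (x i)) ∧
  ∃ i j, ∑ k ∈ univ.filter (fun k => P i k ≤ P i j), x i k <
         ∑ k ∈ univ.filter (fun k => P i k ≤ P i j), y i k

/-- `x` is ordinally efficient at profile `P`. -/
def OrdEffAt {n : ℕ} (P : Fin n → Pref n) (x : Assignment n) : Prop :=
  ¬ ∃ y, BiStochastic y ∧ StrictDom P y x

/-- An ordinally efficient mechanism. -/
def OrdEff {n : ℕ} (φ : Mechanism n) : Prop := ∀ P, OrdEffAt P (φ P)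

/-- Symmetry (equal treatment of equals). -/
def SymmetricMech {n : ℕ} (φ : Mechanism n) : Prop :=
  ∀ P (i i' : Fin n), P i = P i' → φ P i = φ P i'

/-- Anonymity: exchanging two agents' reports exchanges their assignment vectors. -/
def Anonymous {n : ℕ} (φ : Mechanism n) : Prop :=
  ∀ P (i i' : Fin n), φ P i = φ (fun k => P (Equiv.swap i i' k)) i'

/-- Neutrality: relabeling objects via `π` relabels the assignment columns. -/
def Neutral {n : ℕ} (φ : Mechanism n) : Prop :=
  ∀ P (π : Equiv.Perm (Fin n)) (i j : Fin n),
    φ (fun k => π.symm.trans (P k)) i (π j) = φ P i j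

/-- Non-bossiness. -/
def NonBossy {n : ℕ} (φ : Mechanism n) : Prop :=
  ∀ (P : Fin n → Pref n) (i : Fin n) (P' : Pref n),
    φ (Function.update P i P') i = φ P i →
    φ (Function.update P i P') = φ P

/-- Objects: `a = 0`, `b = 1`, `c = 2`, `d = 3`. Preference orders as rank functions. -/
noncomputable def pABCD : Pref 4 := Equiv.ofBijective ![0, 1, 2, 3] (by decide)
noncomputable def pABDC : Pref 4 := Equiv.ofBijective ![0, 1, 3, 2] (by decide)
noncomputable def pADBC : Pref 4 := Equiv.ofBijective ![0, 2, 3, 1] (by decide)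
noncomputable def pBACD : Pref 4 := Equiv.ofBijective ![1, 0, 2, 3] (by decide)
noncomputable def pBADC : Pref 4 := Equiv.ofBijective ![1, 0, 3, 2] (by decide)
noncomputable def pBDCA : Pref 4 := Equiv.ofBijective ![3, 0, 2, 1] (by decide)
noncomputable def pDBCA : Pref 4 := Equiv.ofBijective ![3, 1, 2, 0] (by decide)

private lemma adjCD : AdjSwap pABCD pABDC 2 3 := by
  constructor
  · rfl
  · exact Equiv.ext (by decide)

set_option maxHeartbeats 1000000 in
theorem profile_IV (φ : Mechanism 4)
    (hV : ValidMech φ) (hUI : UpperInvariant φ) (hOE : OrdEff φ) (hS : SymmetricMech φ) :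
    ∀ i : Fin 4,
      φ (fun k => if k = 2 ∨ k = 3 then pABDC else pABCD) i =
        if i = 2 ∨ i = 3 then ![1 / 4, 1 / 4, 0, 1 / 2]
        else ![1 / 4, 1 / 4, 1 / 2, 0] := by
  classical
  set P4 : Fin 4 → Pref 4 := fun k => if k = 2 ∨ k = 3 then pABDC else pABCD with hP4def
  set P0 : Fin 4 → Pref 4 := fun _ => pABCD with hP0def
  set P3 : Fin 4 → Pref 4 := Function.update P0 3 pABDC with hP3def
  -- Step A: uniform profile gives 1/4 everywhere
  have h0 : ∀ i j, φ P0 i j = 1/4 := by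
    intro i j
    have hrow : ∀ i', φ P0 i' j = φ P0 i j := fun i' => congrFun (hS P0 i' i rfl) j
    have hcol := (hV P0).2.2 j
    rw [Fin.sum_univ_four, hrow 0, hrow 1, hrow 2, hrow 3] at hcol
    linarith
  -- Step B: agent 3 swaps c,d
  have h3ab : ∀ j : Fin 4, j = 0 ∨ j = 1 → φ P3 3 j = 1/4 := by
    intro j hj
    have h := hUI P0 3 2 3 pABDC adjCD j (by rcases hj with h | h <;> subst h <;> decide)
    rw [← hP3def] at h
    rw [h, h0]
  have hP3eq : ∀ i : Fin 4, i ≠ 3 → P3 i = pABCD := by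
    intro i hi
    simp [hP3def, Function.update, hi, hP0def]
  have h3c : ∀ j : Fin 4, j = 0 ∨ j = 1 → φ P3 2 j = 1/4 := by
    intro j hj
    have hcol := (hV P3).2.2 j
    have e0 : φ P3 0 j = φ P3 2 j :=
      congrFun (hS P3 0 2 (by rw [hP3eq 0 (by decide), hP3eq 2 (by decide)])) j
    have e1 : φ P3 1 j = φ P3 2 j :=
      congrFun (hS P3 1 2 (by rw [hP3eq 1 (by decide), hP3eq 2 (by decide)])) j
    rw [Fin.sum_univ_four, e0, e1, h3ab j hj] at hcol
    linarith
  -- Step C: agent 2 swaps c,d, reaching P4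
  have hP3two : P3 2 = pABCD := hP3eq 2 (by decide)
  have hupd : Function.update P3 2 pABDC = P4 := by
    funext k
    fin_cases k <;> simp [hP3def, hP4def, Function.update, hP0def]
  have h4c : ∀ j : Fin 4, j = 0 ∨ j = 1 → φ P4 2 j = 1/4 := by
    intro j hj
    have h := hUI P3 2 2 3 pABDC (hP3two ▸ adjCD)
        j (by rw [hP3two]; rcases hj with h | h <;> subst h <;> decide)
    rw [hupd] at h
    rw [h]
    exact h3c j hj
  -- facts about x := φ P4
  have hP40 : P4 0 = pABCD := by simp [hP4def]
  have hP41 : P4 1 = pABCD := by simp [hP4def]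
  have hP42 : P4 2 = pABDC := by simp [hP4def]
  have hP43 : P4 3 = pABDC := by simp [hP4def]
  have r01 : φ P4 1 = φ P4 0 := hS P4 1 0 (by rw [hP40, hP41])
  have r23 : φ P4 3 = φ P4 2 := hS P4 3 2 (by rw [hP42, hP43])
  have hx20 : φ P4 2 0 = 1/4 := h4c 0 (Or.inl rfl)
  have hx21 : φ P4 2 1 = 1/4 := h4c 1 (Or.inr rfl)
  have hx00 : φ P4 0 0 = 1/4 := by
    have hcol := (hV P4).2.2 0
    rw [Fin.sum_univ_four, congrFun r01 0, congrFun r23 0, hx20] at hcol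
    linarith
  have hx01 : φ P4 0 1 = 1/4 := by
    have hcol := (hV P4).2.2 1
    rw [Fin.sum_univ_four, congrFun r01 1, congrFun r23 1, hx21] at hcol
    linarith
  have hrow0 := (hV P4).2.1 0
  have hrow2 := (hV P4).2.1 2
  rw [Fin.sum_univ_four] at hrow0 hrow2
  have hcol2 := (hV P4).2.2 2
  rw [Fin.sum_univ_four, congrFun r01 2, congrFun r23 2] at hcol2
  have hpos := (hV P4).1
  have h03 := hpos 0 3
  have h22 := hpos 2 2
  -- key structural relation
  have hkey : φ P4 2 2 = φ P4 0 3 := by linarith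
  -- Step D: ordinal efficiency forces x 0 3 = 0
  have ht0 : φ P4 0 3 = 0 := by
    by_contra hne
    have ht : 0 < φ P4 0 3 := lt_of_le_of_ne h03 (Ne.symm hne)
    set y : Assignment 4 := fun i => if i = 2 ∨ i = 3 then ![1/4, 1/4, 0, 1/2]
      else ![1/4, 1/4, 1/2, 0] with hydef
    have hy0 : y 0 = ![1/4, 1/4, 1/2, 0] := by simp [hydef]
    have hy1 : y 1 = ![1/4, 1/4, 1/2, 0] := by simp [hydef]
    have hy2 : y 2 = ![1/4, 1/4, 0, 1/2] := by simp [hydef]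
    have hy3 : y 3 = ![1/4, 1/4, 0, 1/2] := by simp [hydef]
    have hyB : BiStochastic y := by
      refine ⟨?_, ?_, ?_⟩
      · intro i j; fin_cases i <;> fin_cases j <;> simp [hydef]
      · intro i; fin_cases i <;> simp [hydef, Fin.sum_univ_four] <;> norm_num
      · intro j; fin_cases j <;> simp [hydef, Fin.sum_univ_four] <;> norm_num
    have F0 : FOSD (P4 0) (y 0) (φ P4 0) := by
      intro j
      rw [hP40, hy0]
      fin_cases j <;>
        simp only [Finset.sum_filter, Fin.sum_univ_four] <;>
        simp (config := { decide := true }) [pABCD] <;> linarith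
    have F1 : FOSD (P4 1) (y 1) (φ P4 1) := by
      intro j
      rw [hP41, hy1, r01]
      fin_cases j <;>
        simp only [Finset.sum_filter, Fin.sum_univ_four] <;>
        simp (config := { decide := true }) [pABCD] <;> linarith
    have F2 : FOSD (P4 2) (y 2) (φ P4 2) := by
      intro j
      rw [hP42, hy2]
      fin_cases j <;>
        simp only [Finset.sum_filter, Fin.sum_univ_four] <;>
        simp (config := { decide := true }) [pABDC] <;> linarith
    have F3 : FOSD (P4 3) (y 3) (φ P4 3) := by
      intro j
      rw [hP43, hy3, r23]
      fin_cases j <;>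
        simp only [Finset.sum_filter, Fin.sum_univ_four] <;>
        simp (config := { decide := true }) [pABDC] <;> linarith
    refine hOE P4 ⟨y, hyB, ?_, 0, 2, ?_⟩
    · intro i
      fin_cases i
      · exact F0
      · exact F1
      · exact F2
      · exact F3
    · rw [hP40, hy0]
      simp only [Finset.sum_filter, Fin.sum_univ_four]
      simp (config := { decide := true }) [pABCD]
      linarith
  -- conclude all entries
  have hx02 : φ P4 0 2 = 1/2 := by linarith
  have hx22 : φ P4 2 2 = 0 := by rw [hkey, ht0]
  have hx23 : φ P4 2 3 = 1/2 := by linarith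
  have R0 : φ P4 0 = ![1/4, 1/4, 1/2, 0] := by
    funext j
    fin_cases j
    · simpa using hx00
    · simpa using hx01
    · simpa using hx02
    · simpa using ht0
  have R2 : φ P4 2 = ![1/4, 1/4, 0, 1/2] := by
    funext j
    fin_cases j
    · simpa using hx20
    · simpa using hx21
    · simpa using hx22
    · simpa using hx23
  intro i
  fin_cases i
  · simpa using R0
  · simpa [r01] using R0
  · simpa using R2
  · simpa [r23] using R2
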